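/- Let X and U be two distinct three-element sets of nonempty words over Σ that are the bases of 3-maximal submonoids X* and U* of Σ*, and let Z = X ∪ U. Then there is no set Y ⊆ Σ* of cardinality at most 3 with Z ⊆ Y* (equivalently, the free rank of Z is greater than 3). -/

import Mathlib

/-- The basis of a submonoid `M` of the free monoid `Σ*`: `(M \ {ε}) \ (M \ {ε})²`. -/
def basisOf {α : Type*} (M : Submonoid (FreeMonoid α)) : Set (FreeMonoid α) :=
  ((M : Set (FreeMonoid α)) \ {1}) \
    {w | ∃ u ∈ (M : Set (FreeMonoid α)) \ {1}, ∃ v ∈ (M : Set (FreeMonoid α)) \ {1}, w = u * v}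

/-- A submonoid of `Σ*` is `k`-maximal if its rank (cardinality of its basis) is at most `k`
and it is maximal (w.r.t. inclusion) among submonoids of rank at most `k`. -/
def IsKMaximal {α : Type*} (k : ℕ) (M : Submonoid (FreeMonoid α)) : Prop :=
  (basisOf M).Finite ∧ (basisOf M).ncard ≤ k ∧
    ∀ M' : Submonoid (FreeMonoid α),
      (basisOf M').Finite → (basisOf M').ncard ≤ k → M ≤ M' → M = M'

/-! A submonoid `M` of rank at most `k` containing the bases `X` and `U` of two `k`-maximal
submonoids contains `X*` and `U*`, so maximality forces `X* = M = U*`, and the bases agree.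
For `M = Y*` the rank bound comes from the fact that the basis of `Y*` lies inside `Y`. -/

section

variable {α : Type*}

theorem basisOf_closure_subset (Y : Set (FreeMonoid α)) :
    basisOf (Submonoid.closure Y) ⊆ Y := by
  set M := Submonoid.closure Y
  suffices key : ∀ w ∈ M, w ∈ Y ∨ w = 1 ∨ ∃ u ∈ (M : Set (FreeMonoid α)) \ {1},
      ∃ v ∈ (M : Set (FreeMonoid α)) \ {1}, w = u * v by
    rintro w ⟨⟨hwM, hw1⟩, hw_irred⟩
    exact (key w hwM).resolve_right (not_or.mpr ⟨hw1, hw_irred⟩)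
  intro w hw
  induction hw using Submonoid.closure_induction with
  | mem y hy => exact .inl hy
  | one => exact .inr (.inl rfl)
  | mul u v hu hv ihu ihv =>
    by_cases hu1 : u = 1
    · simpa [hu1] using ihv
    by_cases hv1 : v = 1
    · simpa [hv1] using ihu
    exact .inr (.inr ⟨u, ⟨hu, hu1⟩, v, ⟨hv, hv1⟩, rfl⟩)

theorem IsKMaximal.eq_closure_of_le {k : ℕ} {M : Submonoid (FreeMonoid α)}
    (hM : IsKMaximal k M) {Y : Set (FreeMonoid α)} (hYfin : Y.Finite) (hYk : Y.ncard ≤ k)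
    (hle : M ≤ Submonoid.closure Y) : M = Submonoid.closure Y :=
  hM.2.2 _ (hYfin.subset (basisOf_closure_subset Y))
    ((Set.ncard_le_ncard (basisOf_closure_subset Y) hYfin).trans hYk) hle

end

theorem free_rank_of_union_gt_three_general {α : Type*} (X U : Set (FreeMonoid α))
    (hXU : X ≠ U)
    (hXbasis : basisOf (Submonoid.closure X) = X)
    (hUbasis : basisOf (Submonoid.closure U) = U)
    (hXmax : IsKMaximal 3 (Submonoid.closure X))
    (hUmax : IsKMaximal 3 (Submonoid.closure U)) :
    ¬ ∃ Y : Set (FreeMonoid α), Y.Finite ∧ Y.ncard ≤ 3 ∧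
        X ∪ U ⊆ (Submonoid.closure Y : Set (FreeMonoid α)) := by
  rintro ⟨Y, hYfin, hY3, hXUY⟩
  have hXY := hXmax.eq_closure_of_le hYfin hY3
    (Submonoid.closure_le.mpr (Set.subset_union_left.trans hXUY))
  have hUY := hUmax.eq_closure_of_le hYfin hY3
    (Submonoid.closure_le.mpr (Set.subset_union_right.trans hXUY))
  exact hXU (by rw [← hXbasis, ← hUbasis, hXY, hUY])

/-- If `X` and `U` are bases of two distinct 3-maximal submonoids, then `Z = X ∪ U`
is not contained in `Y*` for any set `Y` of cardinality at most 3 (the free rank of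
`Z` is greater than 3). -/
theorem free_rank_of_union_gt_three {α : Type*} (X U : Set (FreeMonoid α))
    (hXne : ∀ w ∈ X, w ≠ 1) (hUne : ∀ w ∈ U, w ≠ 1)
    (hX3 : X.ncard = 3) (hU3 : U.ncard = 3) (hXU : X ≠ U)
    (hXbasis : basisOf (Submonoid.closure X) = X)
    (hUbasis : basisOf (Submonoid.closure U) = U)
    (hXmax : IsKMaximal 3 (Submonoid.closure X))
    (hUmax : IsKMaximal 3 (Submonoid.closure U)) :
    ¬ ∃ Y : Set (FreeMonoid α), Y.Finite ∧ Y.ncard ≤ 3 ∧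
        X ∪ U ⊆ (Submonoid.closure Y : Set (FreeMonoid α)) :=
  free_rank_of_union_gt_three_general X U hXU hXbasis hUbasis hXmax hUmax
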